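/- arXiv:2505.08549 — 2 statements merged into one kernel-verified Lean document; each statement's English description precedes it below -/
import Mathlib

section
/- Let p be a prime and f = a_0 + a_1 x + ... + a_n x^n ∈ ℤ[x] a primitive polynomial such that there exists an index j with 1 ≤ j ≤ n for which (i) p ∤ a_j, (ii) v_p(a_0) ≤ v_p(a_i) for each i = 1, ..., j-1, and (iii) gcd(v_p(a_0), j) = 1. Let d = |a_0| / p^{v_p(a_0)}. If either j = n, or every complex zero θ of f satisfies |θ| > d, then f is irreducible in ℤ[x]. -/
open Polynomial

/-!
Let `m = v_p(a₀)`. The `p`-adic Newton polygon of `f` begins with the edge from `(0, m)` to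
`(j, 0)`, which contains no other lattice point because `gcd(m, j) = 1`. Concretely, take `c > 0`
with `c ^ j = p ^ (-m)`: the Gauss norm `maxᵢ |aᵢ|_p cⁱ` of `f` is attained at `a₀`, and since Gauss
norms are multiplicative, for `f = g h` the Gauss norms of `g` and `h` are attained at their
constant terms as well. Modulo `p`, `x ^ j` exactly divides `f`, so `x ^ r` and `x ^ s` exactly
divide `g` and `h` with `r + s = j`; comparing `|g₀|_p` with `|g_r|_p cʳ = cʳ` gives
`j v_p(g₀) = m r`, hence `j ∣ r` and `r ∈ {0, j}`. So one factor `u` has degree at least `j` and the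
other factor `w` has `p ∤ w(0)`. If `j = n`, then `w` is constant, which is impossible for primitive
`f`. Otherwise `w(0)` divides `a₀` and is prime to `p`, so `|w(0)| ≤ d`, whereas
`|w(0)| = |lc w| ∏ |θ| > d`, the product running over the roots of `w`, which are roots of `f`.
-/

namespace Polynomial

variable {R : Type*}

theorem gaussNorm_le_of_forall_le {F : Type*} [Semiring R] [FunLike F R ℝ] [ZeroHomClass F R ℝ]
    {v : F} {c B : ℝ} {f : R[X]} (h : ∀ i, v (f.coeff i) * c ^ i ≤ B) : f.gaussNorm v c ≤ B := by
  obtain ⟨i, hi⟩ := f.exists_eq_gaussNorm v c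
  exact hi ▸ h i

theorem gaussNorm_eq_coeff_zero_of_mul [Ring R] {v : AbsoluteValue R ℝ} (hna : IsNonarchimedean v)
    {c : ℝ} (hc : 0 < c) {g h : R[X]} (h0 : (g * h).coeff 0 ≠ 0)
    (hle : (g * h).gaussNorm v c ≤ v ((g * h).coeff 0)) :
    g.gaussNorm v c = v (g.coeff 0) ∧ h.gaussNorm v c = v (h.coeff 0) := by
  rw [mul_coeff_zero] at h0 hle
  rw [gaussNorm_mul hna hc, map_mul] at hle
  have hg := g.le_gaussNorm v hc.le 0
  have hh := h.le_gaussNorm v hc.le 0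
  simp only [pow_zero, mul_one] at hg hh
  have hg0 : 0 < v (g.coeff 0) := v.pos_iff.2 (left_ne_zero_of_mul h0)
  have hh0 : 0 < v (h.coeff 0) := v.pos_iff.2 (right_ne_zero_of_mul h0)
  constructor <;> nlinarith

theorem natTrailingDegree_map_le_natDegree {S : Type*} [Semiring R] [Semiring S] (φ : R →+* S)
    (u : R[X]) : (u.map φ).natTrailingDegree ≤ u.natDegree :=
  (natTrailingDegree_le_natDegree _).trans natDegree_map_le

theorem IsPrimitive.irreducible_of_forall_natDegree_pos [CommRing R] [IsDomain R] {f : R[X]}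
    (hf : f.IsPrimitive) (hdeg : 0 < f.natDegree)
    (H : ∀ g h : R[X], g * h = f → 0 < g.natDegree → 0 < h.natDegree → False) :
    Irreducible f := by
  refine ⟨fun hu => hdeg.ne' (natDegree_eq_zero_of_isUnit hu), fun g h hgh => ?_⟩
  have isUnit_of_natDegree_eq_zero : ∀ u w : R[X], u * w = f → u.natDegree = 0 → IsUnit u :=
    fun u w huw hu => by
      rw [eq_C_of_natDegree_eq_zero hu] at huw ⊢
      exact isUnit_C.2 (hf _ ⟨w, huw.symm⟩)
  by_contra! hne
  exact H g h hgh.symm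
    (Nat.pos_of_ne_zero fun h0 => hne.1 (isUnit_of_natDegree_eq_zero g h hgh.symm h0))
    (Nat.pos_of_ne_zero fun h0 =>
      hne.2 (isUnit_of_natDegree_eq_zero h g ((mul_comm h g).trans hgh.symm) h0))

theorem lt_natAbs_coeff_zero_of_lt_norm_roots {w : ℤ[X]} (hw : 0 < w.natDegree) {d : ℝ}
    (hd : 1 ≤ d) (hroots : ∀ θ : ℂ, aeval θ w = 0 → d < ‖θ‖) : d < (w.coeff 0).natAbs := by
  set W := w.map (algebraMap ℤ ℂ)
  have hinj : Function.Injective (algebraMap ℤ ℂ) := RingHom.injective_int _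
  have hW : W.Splits := IsAlgClosed.splits W
  have hcard : 0 < Multiset.card W.roots := by
    rwa [← hW.natDegree_eq_card_roots, natDegree_map_eq_of_injective hinj]
  have hlc : 1 ≤ ‖W.leadingCoeff‖ := by
    rw [leadingCoeff_map_of_injective hinj, algebraMap_int_eq, eq_intCast, Complex.norm_intCast]
    exact_mod_cast Int.one_le_abs (leadingCoeff_ne_zero.2 (ne_zero_of_natDegree_gt hw))
  have hprod : d < (W.roots.map (‖·‖)).prod := calc
    d ≤ d ^ Multiset.card W.roots := le_self_pow₀ hd hcard.ne'
    _ = (W.roots.map fun _ => d).prod := by simp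
    _ < (W.roots.map (‖·‖)).prod :=
        Multiset.prod_map_lt_prod_map (Multiset.card_pos.1 hcard) _ _ (fun _ _ => by linarith)
          fun θ hθ => hroots θ (mem_aroots.1 hθ).2
  have hcoeff : ((w.coeff 0).natAbs : ℝ) = ‖W.leadingCoeff‖ * (W.roots.map (‖·‖)).prod := by
    rw [Nat.cast_natAbs, Int.cast_abs, ← Complex.norm_intCast, ← eq_intCast (algebraMap ℤ ℂ),
      ← coeff_map, hW.coeff_zero_eq_leadingCoeff_mul_prod_roots]
    simp only [norm_mul, norm_pow, norm_neg, norm_one, one_pow, one_mul]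
    exact congrArg _ (map_multiset_prod (normHom (α := ℂ)) _)
  rw [hcoeff]
  nlinarith

end Polynomial

namespace Int

variable (p : ℕ) [Fact p.Prime]

noncomputable def padicAbv : AbsoluteValue ℤ ℝ where
  toFun z := Rat.AbsoluteValue.padic p z
  map_mul' x y := by simp only [Int.cast_mul, map_mul]
  nonneg' x := AbsoluteValue.nonneg _ _
  eq_zero' x := by rw [AbsoluteValue.eq_zero, Int.cast_eq_zero]
  add_le' x y := by simpa only [Int.cast_add] using AbsoluteValue.add_le _ _ _

variable {p}

theorem padicAbv_apply (z : ℤ) : padicAbv p z = padicNorm p z := rfl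

theorem isNonarchimedean_padicAbv : IsNonarchimedean (padicAbv p) := fun x y => by
  have := padicNorm.nonarchimedean (p := p) (q := (x : ℚ)) (r := y)
  rw [padicAbv_apply, padicAbv_apply, padicAbv_apply, Int.cast_add]
  exact_mod_cast this

theorem padicAbv_le_one (z : ℤ) : padicAbv p z ≤ 1 :=
  Rat.AbsoluteValue.padic_le_one p z

theorem padicAbv_eq_one_iff (z : ℤ) : padicAbv p z = 1 ↔ ¬ (p : ℤ) ∣ z := by
  rw [padicAbv_apply, ← padicNorm.int_eq_one_iff]
  exact_mod_cast Iff.rfl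

theorem padicAbv_eq_zpow {z : ℤ} (hz : z ≠ 0) :
    padicAbv p z = (p : ℝ) ^ (-(padicValInt p z : ℤ)) := by
  rw [padicAbv_apply, padicNorm.eq_zpow_of_nonzero (by exact_mod_cast hz), padicValRat.of_int]
  push_cast
  rfl

theorem padicAbv_le_of_pow_dvd {n : ℕ} {z : ℤ} (h : (p : ℤ) ^ n ∣ z) :
    padicAbv p z ≤ (p : ℝ) ^ (-(n : ℤ)) := by
  have := (padicNorm.dvd_iff_norm_le (p := p)).1 (by exact_mod_cast h)
  rwa [padicAbv_apply, ← Rat.cast_natCast, ← Rat.cast_zpow, Rat.cast_le]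

theorem natAbs_le_div_pow_padicValInt {a b : ℤ} (ha : a ≠ 0) (hba : b ∣ a)
    (hpb : ¬ (p : ℤ) ∣ b) : b.natAbs ≤ a.natAbs / p ^ padicValInt p a := by
  rw [padicValInt, ← Nat.factorization_def _ Fact.out]
  exact Nat.le_of_dvd (Nat.ordCompl_pos p (natAbs_ne_zero.2 ha))
    (Nat.dvd_ordCompl_of_dvd_not_dvd (natAbs_dvd_natAbs.2 hba) (by rwa [← Int.natCast_dvd]))

end Int

namespace Polynomial

variable {p : ℕ} [Fact p.Prime]

theorem coeff_map_zmod_eq_zero_iff (u : ℤ[X]) (i : ℕ) :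
    (u.map (Int.castRingHom (ZMod p))).coeff i = 0 ↔ (p : ℤ) ∣ u.coeff i := by
  rw [coeff_map, eq_intCast, ZMod.intCast_zmod_eq_zero_iff_dvd]

theorem map_zmod_ne_zero_of_not_dvd {u : ℤ[X]} {j : ℕ} (hj : ¬ (p : ℤ) ∣ u.coeff j) :
    u.map (Int.castRingHom (ZMod p)) ≠ 0 := fun hu =>
  hj ((coeff_map_zmod_eq_zero_iff u j).1 (by rw [hu, coeff_zero]))

theorem not_dvd_coeff_natTrailingDegree_map_zmod {u : ℤ[X]}
    (hu : u.map (Int.castRingHom (ZMod p)) ≠ 0) :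
    ¬ (p : ℤ) ∣ u.coeff (u.map (Int.castRingHom (ZMod p))).natTrailingDegree :=
  (coeff_map_zmod_eq_zero_iff _ _).not.1 (coeff_natTrailingDegree_ne_zero.2 hu)

theorem natTrailingDegree_map_zmod_add_of_mul_eq {f g h : ℤ[X]} {j : ℕ} (hgh : g * h = f)
    (hlt : ∀ i < j, (p : ℤ) ∣ f.coeff i) (hj : ¬ (p : ℤ) ∣ f.coeff j) :
    (g.map (Int.castRingHom (ZMod p))).natTrailingDegree +
      (h.map (Int.castRingHom (ZMod p))).natTrailingDegree = j := by
  have hf := map_zmod_ne_zero_of_not_dvd hj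
  rw [← hgh, Polynomial.map_mul] at hf
  rw [← natTrailingDegree_mul (left_ne_zero_of_mul hf) (right_ne_zero_of_mul hf),
    ← Polynomial.map_mul, hgh]
  exact le_antisymm (natTrailingDegree_le_of_ne_zero ((coeff_map_zmod_eq_zero_iff f j).not.2 hj))
    (le_natTrailingDegree (map_zmod_ne_zero_of_not_dvd hj) fun i hi =>
      (coeff_map_zmod_eq_zero_iff f i).2 (hlt i hi))

theorem mul_padicValInt_coeff_zero_eq_mul_natTrailingDegree {f g h : ℤ[X]} {j : ℕ}
    (hgh : g * h = f) (hf0 : f.coeff 0 ≠ 0) (hm : 0 < padicValInt p (f.coeff 0))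
    (hdvd : ∀ i < j, (p : ℤ) ^ padicValInt p (f.coeff 0) ∣ f.coeff i)
    (hj : ¬ (p : ℤ) ∣ f.coeff j) :
    j * padicValInt p (g.coeff 0) =
      padicValInt p (f.coeff 0) * (g.map (Int.castRingHom (ZMod p))).natTrailingDegree := by
  set v := Int.padicAbv p
  set m := padicValInt p (f.coeff 0)
  set r := (g.map (Int.castRingHom (ZMod p))).natTrailingDegree
  set s := (h.map (Int.castRingHom (ZMod p))).natTrailingDegree
  have hp_dvd : ∀ i < j, (p : ℤ) ∣ f.coeff i := fun i hi =>
    (dvd_pow_self _ hm.ne').trans (hdvd i hi)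
  have hrs : r + s = j := natTrailingDegree_map_zmod_add_of_mul_eq hgh hp_dvd hj
  have hj0 : j ≠ 0 := by
    rintro rfl
    exact hj ((dvd_pow_self _ hm.ne').trans (padicValInt_dvd _))
  have hf0v : v (f.coeff 0) = (p : ℝ) ^ (-(m : ℤ)) := Int.padicAbv_eq_zpow hf0
  -- `|aᵢ|_p cⁱ` takes the same value at both ends `(0, m)` and `(j, 0)` of the first Newton edge
  obtain ⟨c, hc0, hcj⟩ : ∃ c : ℝ, 0 < c ∧ c ^ j = v (f.coeff 0) :=
    ⟨v (f.coeff 0) ^ (j⁻¹ : ℝ), Real.rpow_pos_of_pos (v.pos_iff.2 hf0) _,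
      Real.rpow_inv_natCast_pow (v.nonneg _) hj0⟩
  have hc1 : c ≤ 1 := (pow_le_one_iff_of_nonneg hc0.le hj0).1 (hcj ▸ Int.padicAbv_le_one _)
  have hnorm : f.gaussNorm v c ≤ v (f.coeff 0) := by
    refine gaussNorm_le_of_forall_le fun i => ?_
    rcases lt_or_ge i j with hi | hi
    · calc v (f.coeff i) * c ^ i ≤ v (f.coeff 0) * 1 := by
            gcongr
            · exact hf0v ▸ Int.padicAbv_le_of_pow_dvd (hdvd i hi)
            · exact pow_le_one₀ hc0.le hc1
        _ = v (f.coeff 0) := mul_one _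
    · calc v (f.coeff i) * c ^ i ≤ 1 * c ^ j :=
            mul_le_mul (Int.padicAbv_le_one _) (pow_le_pow_of_le_one hc0.le hc1 hi)
              (by positivity) zero_le_one
        _ = v (f.coeff 0) := by rw [one_mul, hcj]
  have hf := map_zmod_ne_zero_of_not_dvd hj
  rw [← hgh, Polynomial.map_mul] at hf
  rw [← hgh] at hnorm
  obtain ⟨hg, hh⟩ := gaussNorm_eq_coeff_zero_of_mul Int.isNonarchimedean_padicAbv hc0
    (hgh ▸ hf0) hnorm
  have hgr : c ^ r ≤ v (g.coeff 0) := by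
    have := g.le_gaussNorm v hc0.le r
    rwa [hg, (Int.padicAbv_eq_one_iff _).2
      (not_dvd_coeff_natTrailingDegree_map_zmod (left_ne_zero_of_mul hf)), one_mul] at this
  have hhs : c ^ s ≤ v (h.coeff 0) := by
    have := h.le_gaussNorm v hc0.le s
    rwa [hh, (Int.padicAbv_eq_one_iff _).2
      (not_dvd_coeff_natTrailingDegree_map_zmod (right_ne_zero_of_mul hf)), one_mul] at this
  have hprod : v (g.coeff 0) * v (h.coeff 0) = c ^ r * c ^ s := by
    rw [← map_mul, ← mul_coeff_zero, hgh, ← pow_add, hrs, hcj]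
  have hgc : v (g.coeff 0) = c ^ r := by nlinarith [pow_pos hc0 r, pow_pos hc0 s]
  have hg0 : g.coeff 0 ≠ 0 := left_ne_zero_of_mul (by rwa [← mul_coeff_zero, hgh])
  have hpow : (p : ℝ) ^ (-(padicValInt p (g.coeff 0) : ℤ) * j) = (p : ℝ) ^ (-(m : ℤ) * r) := by
    rw [zpow_mul, zpow_mul, zpow_natCast, zpow_natCast, ← Int.padicAbv_eq_zpow hg0, ← hf0v, hgc,
      ← hcj, ← pow_mul, ← pow_mul, mul_comm]
  have := zpow_right_injective₀ (by exact_mod_cast (Fact.out : p.Prime).pos)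
    (by exact_mod_cast (Fact.out : p.Prime).one_lt.ne') hpow
  zify
  linarith

theorem not_dvd_coeff_zero_and_le_natDegree_of_mul_eq {f g h : ℤ[X]} {j : ℕ} (hgh : g * h = f)
    (hf0 : f.coeff 0 ≠ 0) (hdvd : ∀ i < j, (p : ℤ) ^ padicValInt p (f.coeff 0) ∣ f.coeff i)
    (hj : ¬ (p : ℤ) ∣ f.coeff j) (hcop : (padicValInt p (f.coeff 0)).Coprime j) :
    (¬ (p : ℤ) ∣ h.coeff 0 ∧ j ≤ g.natDegree) ∨ (¬ (p : ℤ) ∣ g.coeff 0 ∧ j ≤ h.natDegree) := by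
  have hf : f ≠ 0 := fun h0 => hf0 (by rw [h0, coeff_zero])
  rcases Nat.eq_zero_or_pos (padicValInt p (f.coeff 0)) with hm | hm
  · have hj1 : j = 1 := (Nat.coprime_zero_left j).1 (hm ▸ hcop)
    have hp0 : ¬ (p : ℤ) ∣ g.coeff 0 * h.coeff 0 := by
      rw [← mul_coeff_zero, hgh, ← pow_one (p : ℤ), padicValInt_dvd_iff]
      omega
    have hdeg : 1 ≤ g.natDegree + h.natDegree := by
      rw [← natDegree_mul (left_ne_zero_of_mul (hgh ▸ hf)) (right_ne_zero_of_mul (hgh ▸ hf)), hgh]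
      exact le_natDegree_of_ne_zero (hj1 ▸ fun h0 => hj (h0 ▸ dvd_zero _))
    rcases Nat.eq_zero_or_pos g.natDegree with hg | hg
    · exact Or.inr ⟨fun hd => hp0 (hd.mul_right _), by omega⟩
    · exact Or.inl ⟨fun hd => hp0 (hd.mul_left _), by omega⟩
  have hp_dvd : ∀ i < j, (p : ℤ) ∣ f.coeff i := fun i hi =>
    (dvd_pow_self _ hm.ne').trans (hdvd i hi)
  have hslope := mul_padicValInt_coeff_zero_eq_mul_natTrailingDegree hgh hf0 hm hdvd hj
  have hrs := natTrailingDegree_map_zmod_add_of_mul_eq hgh hp_dvd hj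
  have hf' := map_zmod_ne_zero_of_not_dvd hj
  rw [← hgh, Polynomial.map_mul] at hf'
  have hg := not_dvd_coeff_natTrailingDegree_map_zmod (left_ne_zero_of_mul hf')
  have hh := not_dvd_coeff_natTrailingDegree_map_zmod (right_ne_zero_of_mul hf')
  set r := (g.map (Int.castRingHom (ZMod p))).natTrailingDegree
  set s := (h.map (Int.castRingHom (ZMod p))).natTrailingDegree
  have hr : r = 0 ∨ r = j := by
    have hjr : j ∣ r := hcop.symm.dvd_of_dvd_mul_left ⟨_, hslope.symm⟩
    rcases Nat.eq_zero_or_pos r with hr0 | hr0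
    · exact Or.inl hr0
    · exact Or.inr (Nat.le_antisymm (by omega) (Nat.le_of_dvd hr0 hjr))
  rcases hr with hr | hr
  · refine Or.inr ⟨by rwa [hr] at hg, ?_⟩
    exact (show s = j by omega) ▸ natTrailingDegree_map_le_natDegree _ h
  · refine Or.inl ⟨by rwa [show s = 0 by omega] at hh, ?_⟩
    exact hr ▸ natTrailingDegree_map_le_natDegree _ g

theorem exists_aeval_eq_zero_norm_le_of_dvd {f w : ℤ[X]} (hwf : w ∣ f) (hf0 : f.coeff 0 ≠ 0)
    (hw0 : ¬ (p : ℤ) ∣ w.coeff 0) (hw : 0 < w.natDegree) :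
    ∃ θ : ℂ, aeval θ f = 0 ∧
      ‖θ‖ ≤ ((f.coeff 0).natAbs / p ^ padicValInt p (f.coeff 0) : ℕ) := by
  obtain ⟨u, rfl⟩ := hwf
  have hw_le := Int.natAbs_le_div_pow_padicValInt hf0 ⟨u.coeff 0, mul_coeff_zero w u⟩ hw0
  have hw_pos : 0 < (w.coeff 0).natAbs := Int.natAbs_pos.2 fun h0 => hw0 (h0 ▸ dvd_zero _)
  by_contra! hroots
  have := lt_natAbs_coeff_zero_of_lt_norm_roots hw (by exact_mod_cast hw_pos.trans_le hw_le)
    fun θ hθ => hroots θ (by rw [map_mul, hθ, zero_mul])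
  exact this.not_ge (by exact_mod_cast hw_le)

end Polynomial

/-- Corollary 3 of the paper. -/
theorem irreducible_cor3 (p : ℕ) (hp : p.Prime) (f : Polynomial ℤ) (n : ℕ)
    (hn : f.natDegree = n) (hprim : f.IsPrimitive) (j : ℕ)
    (hj1 : 1 ≤ j) (hjn : j ≤ n)
    (h1 : ¬ (p : ℤ) ∣ f.coeff j)
    (h2 : ∀ i, 1 ≤ i → i < j → f.coeff i ≠ 0 →
      padicValInt p (f.coeff 0) ≤ padicValInt p (f.coeff i))
    (h3 : Nat.gcd (padicValInt p (f.coeff 0)) j = 1)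
    (d : ℕ) (hd : d = (f.coeff 0).natAbs / p ^ padicValInt p (f.coeff 0))
    (hmain : j = n ∨ ∀ θ : ℂ, Polynomial.aeval θ f = 0 → (d : ℝ) < ‖θ‖) :
    Irreducible f := by
  have := Fact.mk hp
  have hdeg_mul : ∀ u w : ℤ[X], u * w = f → u.natDegree + w.natDegree = n := fun u w huw => by
    have hf := huw ▸ hprim.ne_zero
    rw [← hn, ← huw, natDegree_mul (left_ne_zero_of_mul hf) (right_ne_zero_of_mul hf)]
  refine hprim.irreducible_of_forall_natDegree_pos (by omega) fun g h hgh hg hh => ?_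
  by_cases hf0 : f.coeff 0 = 0
  · -- `0` is a root, so `j = n`; and `padicValInt p 0 = 0`, so `h3` forces `j = 1`
    have hjn : j = n := hmain.resolve_right fun hroots =>
      (hroots 0 (by simp [aeval_def, eval₂_at_zero, hf0])).not_ge (by simp)
    have := hdeg_mul g h hgh
    have : j = 1 := by simpa [hf0] using h3
    omega
  have hdvd : ∀ i < j, (p : ℤ) ^ padicValInt p (f.coeff 0) ∣ f.coeff i := fun i hi => by
    rw [padicValInt_dvd_iff]
    rcases Nat.eq_zero_or_pos i with rfl | hi0
    · exact Or.inr le_rfl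
    · exact or_iff_not_imp_left.2 (h2 i hi0 hi)
  obtain ⟨u, w, huw, hw0, hju, hw⟩ : ∃ u w : ℤ[X],
      u * w = f ∧ ¬ (p : ℤ) ∣ w.coeff 0 ∧ j ≤ u.natDegree ∧ 0 < w.natDegree := by
    rcases not_dvd_coeff_zero_and_le_natDegree_of_mul_eq hgh hf0 hdvd h1 h3 with
      ⟨hh0, hjg⟩ | ⟨hg0, hjh⟩
    exacts [⟨g, h, hgh, hh0, hjg, hh⟩, ⟨h, g, (mul_comm h g).trans hgh, hg0, hjh, hg⟩]
  rcases hmain with rfl | hroots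
  · have := hdeg_mul u w huw
    omega
  · obtain ⟨θ, hθ, hle⟩ :=
      exists_aeval_eq_zero_norm_le_of_dvd ⟨u, by rw [← huw, mul_comm]⟩ hf0 hw0 hw
    exact (hroots θ hθ).not_ge (hd ▸ hle)
end

section
/- Let p be a prime and f = a_0 + a_1 x + ... + a_n x^n ∈ ℤ[x] a primitive polynomial of degree n such that there exists an index ℓ with 1 ≤ ℓ + 1 ≤ n for which (i) p ∤ a_n, (ii) v_p(a_ℓ)/(n-ℓ) < v_p(a_i)/(n-i) for each i = 0, 1, ..., n-1 with i ≠ ℓ and a_i ≠ 0, and (iii) gcd(v_p(a_ℓ), n-ℓ) = 1. Then any nontrivial factorization f = f₁ f₂ in ℤ[x] has a factor of degree ≥ n - ℓ; in particular f has an irreducible factor of degree ≥ n - ℓ. -/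
/-!
Put `d = n - ℓ` and `m = v_p(a_ℓ)`. The hypotheses say that every point `(i, v_p(a_i))` lies on
or above the line through `(ℓ, m)` and `(n, 0)`: the Newton polygon of `f` ends with a segment of
slope `-m/d` and width `d`. For the weight `d·v_p(a_i) + m·i` the minimum over a product is at most
the sum of the minima over the factors (Gauss), so both factors again lie above the lines of this
slope through their leading terms. The coefficient of the product in degree `n - d` then splits
the segment from `(ℓ, m)` to `(n, 0)` into two lattice segments of the same slope, one per
factor; since `gcd(m, d) = 1` one of them is trivial, so one factor inherits the whole segment and
has degree at least `d`. Descending along factorizations gives an irreducible such factor.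
-/

open Polynomial

theorem WfDvdMonoid.exists_irreducible_dvd_of_forall_mul {α : Type*} [CommMonoidWithZero α]
    [WfDvdMonoid α] {P : α → Prop} (h0 : ¬ P 0) (hunit : ∀ u, IsUnit u → ¬ P u)
    (hmul : ∀ a b, P (a * b) → P a ∨ P b) {a : α} (ha : P a) :
    ∃ q, Irreducible q ∧ q ∣ a ∧ P q := by
  induction a using WfDvdMonoid.induction_on_irreducible with
  | zero => exact absurd ha h0
  | unit u hu => exact absurd ha (hunit u hu)
  | mul a i _ hi ih =>
    rcases hmul i a ha with hi' | ha'
    · exact ⟨i, hi, dvd_mul_right i a, hi'⟩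
    · obtain ⟨q, hq, hqa, hPq⟩ := ih ha'
      exact ⟨q, hq, hqa.mul_left i, hPq⟩

/-- `(x, v₁)` and `(y, v₂)` lie on or above the ray through `(d, m)` and add up to a point on or
below it, so both lie on it; as `(d, m)` is primitive, one of them is `(d, m)` itself. -/
theorem Nat.Coprime.eq_and_eq_or_eq_and_eq {m d x y v₁ v₂ : ℕ} (hcop : m.Coprime d)
    (hd : 0 < d) (hxy : x + y = d) (h₁ : m * x ≤ d * v₁) (h₂ : m * y ≤ d * v₂)
    (hv : v₁ + v₂ ≤ m) : (x = d ∧ v₁ = m) ∨ (y = d ∧ v₂ = m) := by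
  have hdm : d * (v₁ + v₂) ≤ d * m := Nat.mul_le_mul_left d hv
  have hmd : m * (x + y) = d * m := by rw [hxy, Nat.mul_comm]
  have he₁ : d * v₁ = m * x := by linarith
  have he₂ : d * v₂ = m * y := by linarith
  have hdx : d ∣ x := hcop.symm.dvd_of_dvd_mul_left ⟨v₁, he₁.symm⟩
  rcases Nat.eq_zero_or_pos x with hx | hx
  · right
    refine ⟨by omega, Nat.eq_of_mul_eq_mul_left hd ?_⟩
    rw [he₂, Nat.mul_comm]; congr 1; omega
  · left
    have hxd : x = d := le_antisymm (by omega) (Nat.le_of_dvd hx hdx)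
    refine ⟨hxd, Nat.eq_of_mul_eq_mul_left hd ?_⟩
    rw [he₁, hxd, Nat.mul_comm]

namespace Polynomial

open Finset

theorem not_dvd_coeff_mul_add {R : Type*} [Ring R] {g₁ g₂ : R[X]} {q : R} {i₀ j₀ : ℕ}
    (h₀ : ¬ q ∣ g₁.coeff i₀ * g₂.coeff j₀)
    (h : ∀ i j, i + j = i₀ + j₀ → i ≠ i₀ → q ∣ g₁.coeff i * g₂.coeff j) :
    ¬ q ∣ (g₁ * g₂).coeff (i₀ + j₀) := by
  have hmem : (i₀, j₀) ∈ antidiagonal (i₀ + j₀) := HasAntidiagonal.mem_antidiagonal.mpr rfl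
  rw [coeff_mul, ← add_sum_erase _ _ hmem, dvd_add_left (dvd_sum fun x hx => ?_)]
  · exact h₀
  obtain ⟨hne, hx⟩ := mem_erase.mp hx
  refine h x.1 x.2 (HasAntidiagonal.mem_antidiagonal.mp hx) fun h₁ => hne (Prod.ext h₁ ?_)
  have := HasAntidiagonal.mem_antidiagonal.mp hx
  omega

theorem exists_not_dvd_of_not_dvd_coeff_mul {R : Type*} [Semiring R] {g₁ g₂ : R[X]} {q : R}
    {k : ℕ} (h : ¬ q ∣ (g₁ * g₂).coeff k) : ∃ i j, i + j = k ∧ ¬ q ∣ g₁.coeff i * g₂.coeff j := by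
  rw [coeff_mul] at h
  by_contra! hall
  exact h (dvd_sum fun x hx => hall x.1 x.2 (HasAntidiagonal.mem_antidiagonal.mp hx))

section NewtonEdge

variable (p d m : ℕ)

def newtonWeight (g : ℤ[X]) (i : ℕ) : ℕ := d * padicValInt p (g.coeff i) + m * i

/-- `m * g.natDegree ≤ newtonWeight p d m g i` says that `(i, v_p(g_i))` lies on or above the line
of slope `-m/d` through `(deg g, 0)`; so the segment from `(deg g - d, m)` to `(deg g, 0)` lies on
the Newton polygon of `g`. -/
structure HasNewtonEdge (g : ℤ[X]) : Prop where
  not_dvd_leadingCoeff : ¬ (p : ℤ) ∣ g.leadingCoeff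
  le_natDegree : d ≤ g.natDegree
  coeff_ne_zero : g.coeff (g.natDegree - d) ≠ 0
  padicValInt_coeff : padicValInt p (g.coeff (g.natDegree - d)) = m
  le_newtonWeight : ∀ i ∈ g.support, m * g.natDegree ≤ newtonWeight p d m g i

variable {p d m}

theorem newtonWeight_natDegree {g : ℤ[X]} (hg : ¬ (p : ℤ) ∣ g.leadingCoeff) :
    newtonWeight p d m g g.natDegree = m * g.natDegree := by
  rw [newtonWeight, coeff_natDegree, padicValInt.eq_zero_of_not_dvd hg, mul_zero, zero_add]

theorem exists_newtonWeight_minimal {g : ℤ[X]} (hg : g ≠ 0) :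
    ∃ i₀ ∈ g.support, ∀ i ∈ g.support, newtonWeight p d m g i₀ ≤ newtonWeight p d m g i ∧
      (i < i₀ → newtonWeight p d m g i₀ < newtonWeight p d m g i) := by
  obtain ⟨i₀, hi₀, hmin⟩ := g.support.exists_min_image
    (fun i => toLex (newtonWeight p d m g i, i)) (support_nonempty.mpr hg)
  refine ⟨i₀, hi₀, fun i hi => ?_⟩
  have := hmin i hi
  rw [Prod.Lex.toLex_le_toLex] at this
  omega

theorem hasNewtonEdge_of_le {f : ℤ[X]} {n ℓ : ℕ} (hn : f.natDegree = n) (hℓ : ℓ < n)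
    (hlead : ¬ (p : ℤ) ∣ f.coeff n) (hc : f.coeff ℓ ≠ 0)
    (hslope : ∀ i < n, i ≠ ℓ → f.coeff i ≠ 0 →
      padicValInt p (f.coeff ℓ) * (n - i) ≤ padicValInt p (f.coeff i) * (n - ℓ)) :
    HasNewtonEdge p (n - ℓ) (padicValInt p (f.coeff ℓ)) f := by
  subst hn
  have hℓ' : f.natDegree - (f.natDegree - ℓ) = ℓ := by omega
  refine ⟨hlead, by omega, by rwa [hℓ'], by rw [hℓ'], fun i hi => ?_⟩
  set v := padicValInt p (f.coeff ℓ)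
  have hin := le_natDegree_of_mem_supp i hi
  have ei : v * f.natDegree = v * (f.natDegree - i) + v * i := by
    rw [← Nat.mul_add, Nat.sub_add_cancel hin]
  simp only [newtonWeight]
  rcases hin.lt_or_eq with hlt | rfl
  · by_cases hiℓ : i = ℓ
    · subst hiℓ
      linarith
    · linarith [hslope i hlt hiℓ (mem_support_iff.mp hi)]
  · rw [padicValInt.eq_zero_of_not_dvd hlead]
    omega

variable [Fact p.Prime]

theorem exists_newtonWeight_mul_le {g₁ g₂ : ℤ[X]} (h₁ : g₁ ≠ 0) (h₂ : g₂ ≠ 0) :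
    ∃ i₀ ∈ g₁.support, ∃ j₀ ∈ g₂.support, i₀ + j₀ ∈ (g₁ * g₂).support ∧
      newtonWeight p d m (g₁ * g₂) (i₀ + j₀) ≤
        newtonWeight p d m g₁ i₀ + newtonWeight p d m g₂ j₀ ∧
      (∀ i ∈ g₁.support, newtonWeight p d m g₁ i₀ ≤ newtonWeight p d m g₁ i) ∧
      (∀ j ∈ g₂.support, newtonWeight p d m g₂ j₀ ≤ newtonWeight p d m g₂ j) := by
  obtain ⟨i₀, hi₀, hmin₁⟩ := exists_newtonWeight_minimal (p := p) (d := d) (m := m) h₁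
  obtain ⟨j₀, hj₀, hmin₂⟩ := exists_newtonWeight_minimal (p := p) (d := d) (m := m) h₂
  set t := padicValInt p (g₁.coeff i₀) + padicValInt p (g₂.coeff j₀)
  have ha₀ : g₁.coeff i₀ ≠ 0 := mem_support_iff.mp hi₀
  have hb₀ : g₂.coeff j₀ ≠ 0 := mem_support_iff.mp hj₀
  have hmain : ¬ (p : ℤ) ^ (t + 1) ∣ g₁.coeff i₀ * g₂.coeff j₀ := by
    rw [padicValInt_dvd_iff, padicValInt.mul ha₀ hb₀]
    simp [ha₀, hb₀, t]
  -- every other term has a strictly larger weight, hence a strictly larger valuation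
  have hrest : ∀ i j, i + j = i₀ + j₀ → i ≠ i₀ → (p : ℤ) ^ (t + 1) ∣ g₁.coeff i * g₂.coeff j := by
    intro i j hij hi
    by_cases ha : g₁.coeff i = 0
    · simp [ha]
    by_cases hb : g₂.coeff j = 0
    · simp [hb]
    have hlt : newtonWeight p d m g₁ i₀ + newtonWeight p d m g₂ j₀ <
        newtonWeight p d m g₁ i + newtonWeight p d m g₂ j := by
      have h₁ := hmin₁ i (mem_support_iff.mpr ha)
      have h₂ := hmin₂ j (mem_support_iff.mpr hb)
      rcases Nat.lt_or_gt_of_ne hi with hlt | hgt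
      · linarith [h₁.2 hlt]
      · linarith [h₂.2 (by omega)]
    simp only [newtonWeight] at hlt
    have : d * t < d * (padicValInt p (g₁.coeff i) + padicValInt p (g₂.coeff j)) := by
      simp only [t]
      nlinarith
    rw [padicValInt_dvd_iff, padicValInt.mul ha hb]
    exact Or.inr (Nat.lt_of_mul_lt_mul_left this)
  have hcoeff := not_dvd_coeff_mul_add hmain hrest
  rw [padicValInt_dvd_iff, not_or, not_le, Nat.lt_succ_iff] at hcoeff
  refine ⟨i₀, hi₀, j₀, hj₀, mem_support_iff.mpr hcoeff.1, ?_, fun i hi => (hmin₁ i hi).1,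
    fun j hj => (hmin₂ j hj).1⟩
  have := Nat.mul_le_mul_left d hcoeff.2
  simp only [newtonWeight, t] at this ⊢
  linarith

theorem le_newtonWeight_of_mul {g₁ g₂ : ℤ[X]} (h₁ : ¬ (p : ℤ) ∣ g₁.leadingCoeff)
    (h₂ : ¬ (p : ℤ) ∣ g₂.leadingCoeff)
    (h : ∀ k ∈ (g₁ * g₂).support, m * (g₁ * g₂).natDegree ≤ newtonWeight p d m (g₁ * g₂) k) :
    ∀ i ∈ g₁.support, m * g₁.natDegree ≤ newtonWeight p d m g₁ i := by
  have hg₁ : g₁ ≠ 0 := fun h => h₁ (by simp [h])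
  have hg₂ : g₂ ≠ 0 := fun h => h₂ (by simp [h])
  obtain ⟨i₀, -, j₀, -, hk, hle, hmin₁, hmin₂⟩ :=
    exists_newtonWeight_mul_le (p := p) (d := d) (m := m) hg₁ hg₂
  have htop₁ := hmin₁ _ (natDegree_mem_support_of_nonzero hg₁)
  have htop₂ := hmin₂ _ (natDegree_mem_support_of_nonzero hg₂)
  rw [newtonWeight_natDegree h₁] at htop₁
  rw [newtonWeight_natDegree h₂] at htop₂
  have hprod := h _ hk
  rw [natDegree_mul hg₁ hg₂] at hprod
  intro i hi
  have := hmin₁ i hi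
  linarith

theorem HasNewtonEdge.of_mul (hcop : m.Coprime d) (hd : 0 < d) {g₁ g₂ : ℤ[X]}
    (h : HasNewtonEdge p d m (g₁ * g₂)) : HasNewtonEdge p d m g₁ ∨ HasNewtonEdge p d m g₂ := by
  have hlc := h.not_dvd_leadingCoeff
  rw [leadingCoeff_mul] at hlc
  have h₁ : ¬ (p : ℤ) ∣ g₁.leadingCoeff := fun h => hlc (h.mul_right _)
  have h₂ : ¬ (p : ℤ) ∣ g₂.leadingCoeff := fun h => hlc (h.mul_left _)
  have hw₁ := le_newtonWeight_of_mul h₁ h₂ h.le_newtonWeight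
  have hw₂ := le_newtonWeight_of_mul h₂ h₁ (mul_comm g₁ g₂ ▸ h.le_newtonWeight)
  have hg₁ : g₁ ≠ 0 := fun h => h₁ (by simp [h])
  have hg₂ : g₂ ≠ 0 := fun h => h₂ (by simp [h])
  have hdeg := h.le_natDegree
  have hcoeff : ¬ (p : ℤ) ^ (m + 1) ∣ (g₁ * g₂).coeff ((g₁ * g₂).natDegree - d) := by
    rw [padicValInt_dvd_iff, h.padicValInt_coeff]
    simp [h.coeff_ne_zero]
  rw [natDegree_mul hg₁ hg₂] at hdeg hcoeff
  obtain ⟨i, j, hij, hterm⟩ := exists_not_dvd_of_not_dvd_coeff_mul hcoeff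
  rw [padicValInt_dvd_iff, not_or, not_le, Nat.lt_succ_iff] at hterm
  obtain ⟨hab, hv⟩ := hterm
  have ha : g₁.coeff i ≠ 0 := left_ne_zero_of_mul hab
  have hb : g₂.coeff j ≠ 0 := right_ne_zero_of_mul hab
  rw [padicValInt.mul ha hb] at hv
  have hi := le_natDegree_of_ne_zero ha
  have hj := le_natDegree_of_ne_zero hb
  have hwi := hw₁ i (mem_support_iff.mpr ha)
  have hwj := hw₂ j (mem_support_iff.mpr hb)
  simp only [newtonWeight] at hwi hwj
  have ei : m * g₁.natDegree = m * (g₁.natDegree - i) + m * i := by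
    rw [← Nat.mul_add, Nat.sub_add_cancel hi]
  have ej : m * g₂.natDegree = m * (g₂.natDegree - j) + m * j := by
    rw [← Nat.mul_add, Nat.sub_add_cancel hj]
  rcases hcop.eq_and_eq_or_eq_and_eq hd (x := g₁.natDegree - i) (y := g₂.natDegree - j)
    (by omega) (by omega) (by omega) hv with ⟨hx, hvi⟩ | ⟨hy, hvj⟩
  · have : g₁.natDegree - d = i := by omega
    exact Or.inl ⟨h₁, by omega, this ▸ ha, this ▸ hvi, hw₁⟩
  · have : g₂.natDegree - d = j := by omega
    exact Or.inr ⟨h₂, by omega, this ▸ hb, this ▸ hvj, hw₂⟩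

end NewtonEdge

end Polynomial

theorem factor_degree_case_j_eq_n_general (p : ℕ) (hp : p.Prime) (f : Polynomial ℤ) (n : ℕ)
    (hn : f.natDegree = n) (ℓ : ℕ) (hℓ : ℓ + 1 ≤ n)
    (h1 : ¬ (p : ℤ) ∣ f.coeff n)
    (h2 : ∀ i, i < n → i ≠ ℓ → f.coeff i ≠ 0 →
      padicValInt p (f.coeff ℓ) * (n - i) < padicValInt p (f.coeff i) * (n - ℓ))
    (h3 : Nat.gcd (padicValInt p (f.coeff ℓ)) (n - ℓ) = 1) :
    (∀ f₁ f₂ : Polynomial ℤ, f = f₁ * f₂ → ¬ IsUnit f₁ → ¬ IsUnit f₂ →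
      n - ℓ ≤ f₁.natDegree ∨ n - ℓ ≤ f₂.natDegree) ∧
    (∃ g : Polynomial ℤ, Irreducible g ∧ g ∣ f ∧ n - ℓ ≤ g.natDegree) := by
  have : Fact p.Prime := ⟨hp⟩
  obtain ⟨P, hmul, hdeg, hf⟩ : ∃ P : ℤ[X] → Prop, (∀ a b, P (a * b) → P a ∨ P b) ∧
      (∀ g, P g → n - ℓ ≤ g.natDegree) ∧ P f := by
    by_cases hc : f.coeff ℓ = 0
    · -- `padicValInt p 0 = 0`, so `h3` forces `n - ℓ = 1`
      have hd : n - ℓ = 1 := by simpa [hc] using h3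
      refine ⟨fun g => n - ℓ ≤ g.natDegree, fun a b hab => ?_, fun g hg => hg, by omega⟩
      have := natDegree_mul_le (p := a) (q := b)
      omega
    · exact ⟨HasNewtonEdge p (n - ℓ) (padicValInt p (f.coeff ℓ)),
        fun a b hab => hab.of_mul h3 (by omega),
        fun g hg => hg.le_natDegree,
        hasNewtonEdge_of_le hn (by omega) h1 hc fun i hi hiℓ hci => (h2 i hi hiℓ hci).le⟩
  have hpos : ∀ g, P g → 0 < g.natDegree := fun g hg => by have := hdeg g hg; omega
  have h0 : ¬ P 0 := fun hP0 => by simpa using hpos 0 hP0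
  have hunit : ∀ u, IsUnit u → ¬ P u := fun u hu hPu =>
    (hpos u hPu).ne' (natDegree_eq_zero_of_isUnit hu)
  refine ⟨fun f₁ f₂ h _ _ => (hmul f₁ f₂ (h ▸ hf)).imp (hdeg f₁) (hdeg f₂), ?_⟩
  obtain ⟨q, hq, hqf, hPq⟩ := WfDvdMonoid.exists_irreducible_dvd_of_forall_mul h0 hunit hmul hf
  exact ⟨q, hq, hqf, hdeg q hPq⟩

/-- The case j = n of Theorem 1: any nontrivial factorization has a factor of
degree ≥ n - ℓ; in particular f has an irreducible factor of degree ≥ n - ℓ. -/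
theorem factor_degree_case_j_eq_n (p : ℕ) (hp : p.Prime) (f : Polynomial ℤ) (n : ℕ)
    (hn : f.natDegree = n) (hprim : f.IsPrimitive) (ℓ : ℕ) (hℓ : ℓ + 1 ≤ n)
    (h1 : ¬ (p : ℤ) ∣ f.coeff n)
    (h2 : ∀ i, i < n → i ≠ ℓ → f.coeff i ≠ 0 →
      padicValInt p (f.coeff ℓ) * (n - i) < padicValInt p (f.coeff i) * (n - ℓ))
    (h3 : Nat.gcd (padicValInt p (f.coeff ℓ)) (n - ℓ) = 1) :
    (∀ f₁ f₂ : Polynomial ℤ, f = f₁ * f₂ → ¬ IsUnit f₁ → ¬ IsUnit f₂ →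
      n - ℓ ≤ f₁.natDegree ∨ n - ℓ ≤ f₂.natDegree) ∧
    (∃ g : Polynomial ℤ, Irreducible g ∧ g ∣ f ∧ n - ℓ ≤ g.natDegree) :=
  factor_degree_case_j_eq_n_general p hp f n hn ℓ hℓ h1 h2 h3
end
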